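/- Let α ∈ [0,1) and ρ ≥ 0, and define F_{α,ρ}(x) = 1/2 − x + ((√x − ρ/√2)₊)²/(1−α) for x ∈ [0, 1/2]. Then inf_{x ∈ [0,1/2]} F_{α,ρ}(x) = Ψ_α(ρ), where Ψ_α is defined by: if α > 0, Ψ_α(ρ) = 1/2 − ρ²/(2α) for 0 ≤ ρ ≤ α, Ψ_α(ρ) = (1−ρ)²/(2(1−α)) for α < ρ ≤ 1, and Ψ_α(ρ) = 0 for ρ ≥ 1; and Ψ_0(ρ) = ((1−ρ)₊)²/2. -/

import Mathlib

/-!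
Substituting `u = √(2x) ∈ [0,1]` turns the objective into
`(1 - u² + ((u - ρ)₊)² / (1 - α)) / 2`, which equals `(1 - u²) / 2` for `u ≤ ρ` and is a
quadratic with leading coefficient `α / (2(1 - α)) ≥ 0` for `u ≥ ρ`. For `ρ < α` the minimum is at
the vertex `u = ρ / α`, for `α ≤ ρ ≤ 1` at the endpoint `u = 1`, and for `ρ > 1` the positive part
vanishes on all of `[0,1]`, so the minimum `0` is again at `u = 1`.
-/

/-- The function `Ψ_α` from the scalar minimization lemma. -/
noncomputable def Psi (α ρ : ℝ) : ℝ :=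
  if α = 0 then (max (1 - ρ) 0) ^ 2 / 2
  else if ρ ≤ α then 1 / 2 - ρ ^ 2 / (2 * α)
  else if ρ ≤ 1 then (1 - ρ) ^ 2 / (2 * (1 - α))
  else 0

open Set Real

variable {α ρ u : ℝ}

theorem Psi_of_pos_of_le (hα : 0 < α) (h : ρ ≤ α) : Psi α ρ = 1 / 2 - ρ ^ 2 / (2 * α) := by
  rw [Psi, if_neg hα.ne', if_pos h]

theorem Psi_of_le_of_le_one (hα : α < 1) (hαρ : α ≤ ρ) (hρ : ρ ≤ 1) :
    Psi α ρ = (1 - ρ) ^ 2 / (2 * (1 - α)) := by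
  have h1α : 1 - α ≠ 0 := by linarith
  unfold Psi
  split_ifs with h0 hρα
  · subst h0
    rw [max_eq_left (by linarith)]
    ring
  · -- the branches `ρ ≤ α` and `α < ρ ≤ 1` agree at `ρ = α`
    obtain rfl : ρ = α := le_antisymm hρα hαρ
    field_simp
  · rfl

theorem Psi_of_one_lt (hα : α < 1) (h : 1 < ρ) : Psi α ρ = 0 := by
  unfold Psi
  split_ifs
  · rw [max_eq_right (by linarith)]
    ring
  all_goals first | rfl | linarith

noncomputable def reducedObjective (α ρ u : ℝ) : ℝ :=
  (1 - u ^ 2 + (max (u - ρ) 0) ^ 2 / (1 - α)) / 2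

theorem reducedObjective_of_le (h : u ≤ ρ) : reducedObjective α ρ u = (1 - u ^ 2) / 2 := by
  rw [reducedObjective, max_eq_right (by linarith), zero_pow two_ne_zero, zero_div, add_zero]

theorem reducedObjective_of_ge (h : ρ ≤ u) :
    reducedObjective α ρ u = (1 - u ^ 2 + (u - ρ) ^ 2 / (1 - α)) / 2 := by
  rw [reducedObjective, max_eq_left (by linarith)]

theorem objective_eq_reducedObjective {x : ℝ} (hx : 0 ≤ x) :
    1 / 2 - x + (max (√x - ρ / √2) 0) ^ 2 / (1 - α) = reducedObjective α ρ √(2 * x) := by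
  have h2 : (0 : ℝ) < √2 := by positivity
  have hsub : √x - ρ / √2 = (√(2 * x) - ρ) / √2 := by
    rw [sqrt_mul zero_le_two]
    field_simp
  rw [hsub, ← zero_div √2, max_div_div_right h2.le, div_pow, sq_sqrt zero_le_two,
    reducedObjective, sq_sqrt (by positivity)]
  ring

theorem image_sqrt_two_mul_Icc : (fun x : ℝ => √(2 * x)) '' Icc 0 (1 / 2) = Icc 0 1 := by
  ext u
  constructor
  · rintro ⟨x, ⟨-, hx⟩, rfl⟩
    exact ⟨sqrt_nonneg _, sqrt_le_one.mpr (by linarith)⟩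
  · rintro ⟨hu0, hu1⟩
    refine ⟨u ^ 2 / 2, ⟨by positivity, by nlinarith⟩, ?_⟩
    simp only [mul_div_cancel₀ (u ^ 2) two_ne_zero, sqrt_sq hu0]

theorem le_reducedObjective_of_lt (hα1 : α < 1) (hρ : 0 ≤ ρ) (h : ρ < α) (hu : 0 ≤ u) :
    1 / 2 - ρ ^ 2 / (2 * α) ≤ reducedObjective α ρ u := by
  have hα : 0 < α := hρ.trans_lt h
  have h1α : 1 - α ≠ 0 := by linarith
  rcases le_total u ρ with huρ | hρu
  · rw [reducedObjective_of_le huρ]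
    have : ρ ^ 2 / 2 ≤ ρ ^ 2 / (2 * α) :=
      div_le_div_of_nonneg_left (sq_nonneg ρ) (by positivity) (by linarith)
    have : u ^ 2 ≤ ρ ^ 2 := pow_le_pow_left₀ hu huρ 2
    linarith
  · have key : reducedObjective α ρ u - (1 / 2 - ρ ^ 2 / (2 * α)) =
        (α * u - ρ) ^ 2 / (2 * α * (1 - α)) := by
      rw [reducedObjective_of_ge hρu]
      field_simp
      ring
    have : 0 ≤ (α * u - ρ) ^ 2 / (2 * α * (1 - α)) :=
      div_nonneg (sq_nonneg _) (by nlinarith)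
    linarith

theorem le_reducedObjective_of_le_of_le_one (hα : α ∈ Ico (0 : ℝ) 1) (hαρ : α ≤ ρ)
    (hρ1 : ρ ≤ 1) (hu : u ∈ Icc (0 : ℝ) 1) :
    (1 - ρ) ^ 2 / (2 * (1 - α)) ≤ reducedObjective α ρ u := by
  obtain ⟨hα0, hα1⟩ := hα
  have h1α : 0 < 1 - α := by linarith
  rcases le_total u ρ with huρ | hρu
  · rw [reducedObjective_of_le huρ, div_le_iff₀ (by positivity)]
    nlinarith [mul_nonneg (sub_nonneg.mpr hρ1) (by nlinarith : 0 ≤ 2 * ρ - α - α * ρ),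
      mul_le_mul huρ huρ hu.1 (hα0.trans hαρ)]
  · have key : reducedObjective α ρ u - (1 - ρ) ^ 2 / (2 * (1 - α)) =
        (1 - u) * (2 * (ρ - α) + α * (1 - u)) / (2 * (1 - α)) := by
      rw [reducedObjective_of_ge hρu]
      field_simp
      ring
    have : 0 ≤ (1 - u) * (2 * (ρ - α) + α * (1 - u)) / (2 * (1 - α)) := by
      have := hu.2
      apply div_nonneg _ (by positivity)
      exact mul_nonneg (by linarith) (by nlinarith)
    linarith

theorem nonneg_reducedObjective_of_one_lt (h : 1 < ρ) (hu : u ∈ Icc (0 : ℝ) 1) :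
    0 ≤ reducedObjective α ρ u := by
  rw [reducedObjective_of_le (by linarith [hu.2])]
  nlinarith [hu.1, hu.2]

theorem reducedObjective_div (hα1 : α < 1) (hρ : 0 ≤ ρ) (hα : 0 < α) :
    reducedObjective α ρ (ρ / α) = 1 / 2 - ρ ^ 2 / (2 * α) := by
  have h1α : 1 - α ≠ 0 := by linarith
  rw [reducedObjective_of_ge (le_div_self hρ hα hα1.le)]
  field_simp
  ring

theorem reducedObjective_one (hα1 : α < 1) (hρ1 : ρ ≤ 1) :
    reducedObjective α ρ 1 = (1 - ρ) ^ 2 / (2 * (1 - α)) := by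
  have h1α : 1 - α ≠ 0 := by linarith
  rw [reducedObjective_of_ge hρ1]
  field_simp
  ring

theorem isLeast_reducedObjective (hα : α ∈ Ico (0 : ℝ) 1) (hρ : 0 ≤ ρ) :
    IsLeast (reducedObjective α ρ '' Icc 0 1) (Psi α ρ) := by
  have hα1 := hα.2
  rcases lt_or_ge ρ α with hρα | hαρ
  · have hα0 : 0 < α := hρ.trans_lt hρα
    have hmem : ρ / α ∈ Icc (0 : ℝ) 1 := ⟨div_nonneg hρ hα0.le, div_le_one_of_le₀ hρα.le hα0.le⟩
    rw [Psi_of_pos_of_le hα0 hρα.le]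
    exact ⟨⟨ρ / α, hmem, reducedObjective_div hα1 hρ hα0⟩,
      forall_mem_image.2 fun u hu => le_reducedObjective_of_lt hα1 hρ hρα hu.1⟩
  have hmem : (1 : ℝ) ∈ Icc (0 : ℝ) 1 := right_mem_Icc.2 zero_le_one
  rcases le_or_gt ρ 1 with hρ1 | hρ1
  · rw [Psi_of_le_of_le_one hα1 hαρ hρ1]
    exact ⟨⟨1, hmem, reducedObjective_one hα1 hρ1⟩,
      forall_mem_image.2 fun u hu => le_reducedObjective_of_le_of_le_one hα hαρ hρ1 hu⟩
  · rw [Psi_of_one_lt hα1 hρ1]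
    exact ⟨⟨1, hmem, by rw [reducedObjective_of_le hρ1.le]; norm_num⟩,
      forall_mem_image.2 fun u hu => nonneg_reducedObjective_of_one_lt hρ1 hu⟩

theorem scalar_minimization
    (α : ℝ) (hα : α ∈ Set.Ico (0 : ℝ) 1) (ρ : ℝ) (hρ : 0 ≤ ρ) :
    sInf ((fun x : ℝ =>
        1 / 2 - x + (max (Real.sqrt x - ρ / Real.sqrt 2) 0) ^ 2 / (1 - α)) ''
      Set.Icc (0 : ℝ) (1 / 2)) = Psi α ρ := by
  have himage : (fun x : ℝ => 1 / 2 - x + (max (√x - ρ / √2) 0) ^ 2 / (1 - α)) '' Icc 0 (1 / 2) =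
      reducedObjective α ρ '' Icc 0 1 := by
    rw [← image_sqrt_two_mul_Icc, image_image]
    exact image_congr fun x hx => objective_eq_reducedObjective hx.1
  rw [himage]
  exact (isLeast_reducedObjective hα hρ).csInf_eq
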